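/- arXiv:2205.15474 — 2 statements merged into one kernel-verified Lean document; each statement's English description precedes it below -/
import Mathlib

section
/- If f ∈ C¹(ℝ) satisfies f(t)=0 for t≤0, f(t)=o(t) as t→0⁺, and t·f'(t) > f(t) for all t>0, then for all t>0 one has t²·f'(t) > t·f(t) > 2F(t) > 0, where F(t) = ∫₀ᵗ f(s) ds. -/
/-! Since `t f'(t) > f(t)`, the functions `f(t)/t` on `(0, ∞)` and `t f(t) - 2F(t)` on `[0, ∞)` are
strictly increasing: their derivatives are `(t f'(t) - f(t))/t²` and `t f'(t) - f(t)`. The first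
increases from its limit `0` at `0⁺`, so `f > 0` on `(0, ∞)` and hence `F > 0`; the second vanishes
at `0`, so `t f(t) > 2F(t)`. -/

open Filter MeasureTheory Set Topology

theorem strictMonoOn_div_self_of_lt_mul_deriv {f : ℝ → ℝ} (hf : DifferentiableOn ℝ f (Ioi 0))
    (hsup : ∀ t > (0:ℝ), f t < t * deriv f t) :
    StrictMonoOn (fun t => f t / t) (Ioi 0) := by
  refine strictMonoOn_of_deriv_pos (convex_Ioi 0)
    (hf.continuousOn.div continuousOn_id fun t ht => ht.ne') fun t ht => ?_
  rw [interior_Ioi] at ht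
  have hderiv : HasDerivAt (fun t => f t / t) ((deriv f t * t - f t * 1) / t ^ 2) t :=
    ((hf.differentiableAt (Ioi_mem_nhds ht)).hasDerivAt).div (hasDerivAt_id t) ht.ne'
  rw [hderiv.deriv]
  have := hsup t ht
  exact div_pos (by linarith) (pow_pos ht 2)

theorem StrictMonoOn.lt_of_tendsto_nhdsGT {g : ℝ → ℝ} {a l : ℝ} (hg : StrictMonoOn g (Ioi a))
    (hlim : Tendsto g (𝓝[>] a) (𝓝 l)) {t : ℝ} (ht : a < t) : l < g t := by
  have hmid : a < (a + t) / 2 := by linarith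
  have hle : l ≤ g ((a + t) / 2) :=
    le_of_tendsto hlim <| mem_of_superset (Ioo_mem_nhdsGT hmid) fun s hs =>
      (hg hs.1 hmid hs.2).le
  exact hle.trans_lt (hg hmid ht (by linarith))

theorem strictMonoOn_mul_self_sub_two_integral {f : ℝ → ℝ} (hc : Continuous f)
    (hf : DifferentiableOn ℝ f (Ioi 0)) (hsup : ∀ t > (0:ℝ), f t < t * deriv f t) :
    StrictMonoOn (fun t => t * f t - 2 * ∫ s in (0:ℝ)..t, f s) (Ici 0) := by
  have hprim : Continuous fun t => ∫ s in (0:ℝ)..t, f s :=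
    intervalIntegral.continuous_primitive (fun a b => hc.intervalIntegrable a b) 0
  refine strictMonoOn_of_deriv_pos (convex_Ici 0)
    ((continuous_id.mul hc).sub (continuous_const.mul hprim)).continuousOn fun t ht => ?_
  rw [interior_Ici] at ht
  have hderiv : HasDerivAt (fun t => t * f t - 2 * ∫ s in (0:ℝ)..t, f s)
      (1 * f t + t * deriv f t - 2 * f t) t :=
    ((hasDerivAt_id t).mul (hf.differentiableAt (Ioi_mem_nhds ht)).hasDerivAt).sub
      ((hc.integral_hasStrictDerivAt 0 t).hasDerivAt.const_mul 2)
  rw [hderiv.deriv]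
  linarith [hsup t ht]

theorem stmt0_general (f : ℝ → ℝ) (hf : ContDiff ℝ 1 f)
    (hsmall : Tendsto (fun t => f t / t) (nhdsWithin 0 (Set.Ioi 0)) (nhds 0))
    (hsup : ∀ t > (0:ℝ), t * deriv f t > f t) :
    ∀ t > (0:ℝ),
      t ^ 2 * deriv f t > t * f t ∧
      t * f t > 2 * (∫ s in (0:ℝ)..t, f s) ∧
      (∫ s in (0:ℝ)..t, f s) > 0 := by
  have hc : Continuous f := hf.continuous
  have hd : DifferentiableOn ℝ f (Ioi 0) := (hf.differentiable one_ne_zero).differentiableOn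
  have hpos : ∀ t > (0:ℝ), 0 < f t := fun t ht =>
    (div_pos_iff_of_pos_right ht).1
      ((strictMonoOn_div_self_of_lt_mul_deriv hd hsup).lt_of_tendsto_nhdsGT hsmall ht)
  intro t ht
  refine ⟨?_, ?_, ?_⟩
  · rw [sq, mul_assoc]
    exact mul_lt_mul_of_pos_left (hsup t ht) ht
  · have := strictMonoOn_mul_self_sub_two_integral hc hd hsup self_mem_Ici ht.le ht
    simp only [zero_mul, intervalIntegral.integral_same, mul_zero, sub_zero] at this
    linarith
  · exact intervalIntegral.intervalIntegral_pos_of_pos_on (hc.intervalIntegrable 0 t)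
      (fun s hs => hpos s hs.1) ht

theorem stmt0 (f : ℝ → ℝ) (hf : ContDiff ℝ 1 f)
    (h0 : ∀ t ≤ (0:ℝ), f t = 0)
    (hsmall : Tendsto (fun t => f t / t) (nhdsWithin 0 (Set.Ioi 0)) (nhds 0))
    (hsup : ∀ t > (0:ℝ), t * deriv f t > f t) :
    ∀ t > (0:ℝ),
      t ^ 2 * deriv f t > t * f t ∧
      t * f t > 2 * (∫ s in (0:ℝ)..t, f s) ∧
      (∫ s in (0:ℝ)..t, f s) > 0 :=
  stmt0_general f hf hsmall hsup
end

section
/- For all real numbers s, t: if |s| ≥ e^{1/4} then s·t ≤ (e^{t²} − 1) + |s|·(log|s|)^{1/2}, and if |s| ≤ e^{1/4} then s·t ≤ (e^{t²} − 1) + s²/2. -/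
theorem stmt3 (s t : ℝ) :
    (|s| ≥ Real.exp (1/4) →
      s * t ≤ (Real.exp (t ^ 2) - 1) + |s| * Real.sqrt (Real.log |s|)) ∧
    (|s| ≤ Real.exp (1/4) →
      s * t ≤ (Real.exp (t ^ 2) - 1) + s ^ 2 / 2) := by
  constructor
  · intro h
    have ha0 : (0:ℝ) < |s| := lt_of_lt_of_le (Real.exp_pos _) h
    set a := |s| with ha
    have hst : s * t ≤ a * |t| := by
      calc s * t ≤ |s * t| := le_abs_self _
        _ = a * |t| := abs_mul s t
    have hL : (1/4 : ℝ) ≤ Real.log a := by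
      rw [Real.le_log_iff_exp_le ha0]; exact h
    set c := Real.sqrt (Real.log a) with hc
    have hc2 : c ^ 2 = Real.log a := Real.sq_sqrt (by linarith)
    have hchalf : (1/2 : ℝ) ≤ c := by
      have h1 : Real.sqrt (1/4) ≤ c := Real.sqrt_le_sqrt hL
      rwa [show (1/4:ℝ) = (1/2)^2 by norm_num, Real.sqrt_sq (by norm_num)] at h1
    have hae : a = Real.exp (c ^ 2) := by rw [hc2, Real.exp_log ha0]
    rcases le_or_gt |t| c with hu | hu
    · have h1 : a * |t| ≤ a * c := by nlinarith
      have h2 : (0:ℝ) ≤ Real.exp (t^2) - 1 := by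
        have := Real.one_le_exp (sq_nonneg t); linarith
      linarith
    · have hexp : Real.exp (c^2) * (1 + (t^2 - c^2)) ≤ Real.exp (t^2) := by
        have h1 : 1 + (t^2 - c^2) ≤ Real.exp (t^2 - c^2) := by
          linarith [Real.add_one_le_exp (t^2 - c^2)]
        calc Real.exp (c^2) * (1 + (t^2 - c^2))
            ≤ Real.exp (c^2) * Real.exp (t^2 - c^2) := by
              nlinarith [Real.exp_pos (c^2)]
          _ = Real.exp (t^2) := by rw [← Real.exp_add]; ring_nf
      have hE : (1:ℝ) ≤ Real.exp (c^2) := Real.one_le_exp (sq_nonneg c)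
      have hkey : Real.exp (c^2) * (|t| - c) ≤ Real.exp (t^2) - 1 := by
        nlinarith [sq_abs t, mul_nonneg (mul_nonneg (le_of_lt (sub_pos.mpr hu))
          (by linarith : (0:ℝ) ≤ |t| + c - 1)) (le_of_lt (Real.exp_pos (c^2)))]
      calc s * t ≤ a * |t| := hst
        _ = a * c + Real.exp (c^2) * (|t| - c) := by rw [hae]; ring
        _ ≤ a * c + (Real.exp (t^2) - 1) := by linarith
        _ = (Real.exp (t^2) - 1) + a * c := by ring
  · intro _
    nlinarith [Real.add_one_le_exp (t^2), sq_nonneg (|s| - |t|), abs_mul s t,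
      le_abs_self (s*t), sq_abs s, sq_abs t]
end
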